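/- arXiv:1512.04210 — 3 statements merged into one kernel-verified Lean document; each statement's English description precedes it below -/
import Mathlib

section
/- Let R be a commutative refinement ring and let M and N be finitely generated projective R-modules. Then M and N are isomorphic as R-modules if and only if for every prime ideal P of R, the localized modules M_P and N_P are isomorphic as modules over the localization R_P. -/
universe u

/-- A commutative ring `R` is a *refinement ring* if the monoid of finitely generated
projective `R`-modules has the refinement property: whenever `A ⊕ B ≅ C ⊕ D` for finitely
generated projective modules `A, B, C, D`, there are finitely generated projective modules
`E₁₁, E₁₂, E₂₁, E₂₂` with `A ≅ E₁₁ ⊕ E₁₂`, `B ≅ E₂₁ ⊕ E₂₂`, `C ≅ E₁₁ ⊕ E₂₁`,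
`D ≅ E₁₂ ⊕ E₂₂`. -/
def IsRefinementRing (R : Type u) [Ring R] : Prop :=
  ∀ A B C D : ModuleCat.{u} R,
    Module.Finite R A → Module.Projective R A →
    Module.Finite R B → Module.Projective R B →
    Module.Finite R C → Module.Projective R C →
    Module.Finite R D → Module.Projective R D →
    Nonempty ((A × B) ≃ₗ[R] (C × D)) →
    ∃ E₁₁ E₁₂ E₂₁ E₂₂ : ModuleCat.{u} R,
      (Module.Finite R E₁₁ ∧ Module.Projective R E₁₁) ∧
      (Module.Finite R E₁₂ ∧ Module.Projective R E₁₂) ∧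
      (Module.Finite R E₂₁ ∧ Module.Projective R E₂₁) ∧
      (Module.Finite R E₂₂ ∧ Module.Projective R E₂₂) ∧
      Nonempty (A ≃ₗ[R] (E₁₁ × E₁₂)) ∧
      Nonempty (B ≃ₗ[R] (E₂₁ × E₂₂)) ∧
      Nonempty (C ≃ₗ[R] (E₁₁ × E₂₁)) ∧
      Nonempty (D ≃ₗ[R] (E₁₂ × E₂₂))

/-!
A direct summand of `R` is an ideal `eR` with `e` idempotent. Refining `M ⊕ K ≅ R ⊕ Rⁿ⁻¹` over
and over therefore splits a summand `M` of `Rⁿ` as `e₁R ⊕ ⋯ ⊕ eₙR`. The exchange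
`eR ⊕ fR ≅ (e ⊔ f)R ⊕ (e ⊓ f)R` (in the Boolean algebra of idempotents) lets us insertion-sort
the `eᵢ` into a chain `e₁ ≥ ⋯ ≥ eₙ`. For a chain, `eᵢ ∉ P` exactly when `i` is at most the rank
of `M_P`, so the chain is determined by the local ranks of `M`, because an idempotent is
determined by the primes containing it. After padding the complements so that `M` and `N` are
summands of the same `Rⁿ`, isomorphic localizations (hence equal local ranks) give them the same
chain.
-/

open Module PrimeSpectrum

theorem IsIdempotentElem.mem_span_singleton_iff {R : Type*} [CommSemiring R] {e x : R}
    (he : IsIdempotentElem e) : x ∈ Ideal.span {e} ↔ e * x = x := by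
  refine ⟨fun hx => ?_, fun hx => hx ▸ Ideal.mul_mem_right x _ (Ideal.mem_span_singleton_self e)⟩
  obtain ⟨a, rfl⟩ := Ideal.mem_span_singleton'.1 hx
  rw [mul_left_comm, he.eq]

theorem Ideal.exists_isIdempotentElem_eq_span_of_isCompl {R : Type*} [Ring R] {I J : Ideal R}
    (h : IsCompl I J) : ∃ e : R, IsIdempotentElem e ∧ I = Ideal.span {e} := by
  obtain ⟨f, idem, rfl⟩ := I.isIdempotentElemEquiv.symm (I.isComplEquivProj ⟨J, h⟩)
  exact ⟨f 1, LinearMap.isIdempotentElem_map_one_iff.mpr idem, by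
    rw [LinearMap.range_eq_map, ← Ideal.span_one, ← Ideal.submodule_span_eq, LinearMap.map_span,
      Set.image_one, Ideal.submodule_span_eq]⟩

theorem Module.finite_projective_of_prod_equiv {R X Y F : Type*} [Semiring R] [AddCommMonoid X]
    [Module R X] [AddCommMonoid Y] [Module R Y] [AddCommMonoid F] [Module R F] [Module.Finite R F]
    [Module.Projective R F] (φ : (X × Y) ≃ₗ[R] F) :
    Module.Finite R X ∧ Module.Projective R X :=
  ⟨.of_surjective (LinearMap.fst R X Y ∘ₗ φ.symm.toLinearMap)
      (Prod.fst_surjective.comp φ.symm.surjective),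
    .of_split (φ.toLinearMap ∘ₗ LinearMap.inl R X Y) (LinearMap.fst R X Y ∘ₗ φ.symm.toLinearMap)
      (by ext; simp)⟩

theorem exists_prod_equiv_fin_of_projective {R : Type*} [Ring R] (M : Type*) [AddCommGroup M]
    [Module R M] [Module.Finite R M] [Module.Projective R M] :
    ∃ (n : ℕ) (K : Submodule R (Fin n → R)), Nonempty ((M × K) ≃ₗ[R] (Fin n → R)) := by
  obtain ⟨n, f, g, hf, hg, hfg⟩ := Module.Finite.exists_comp_eq_id_of_projective R M
  have hπ : IsIdempotentElem (g ∘ₗ f) := by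
    rw [IsIdempotentElem, Module.End.mul_eq_comp, LinearMap.comp_assoc, ← LinearMap.comp_assoc f,
      hfg, LinearMap.id_comp]
  have hrange : LinearMap.range g = LinearMap.range (g ∘ₗ f) :=
    (LinearMap.range_comp_of_range_eq_top g (LinearMap.range_eq_top.2 hf)).symm
  exact ⟨n, LinearMap.ker (g ∘ₗ f), ⟨((LinearEquiv.ofInjective g hg).trans
    (LinearEquiv.ofEq _ _ hrange)).prodCongr (.refl R _) ≪≫ₗ
      Submodule.prodEquivOfIsCompl _ _ (LinearMap.IsIdempotentElem.isCompl hπ)⟩⟩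

def LinearEquiv.prodPadFin {R X Y : Type*} [Semiring R] [AddCommMonoid X] [Module R X]
    [AddCommMonoid Y] [Module R Y] {n : ℕ} (φ : (X × Y) ≃ₗ[R] (Fin n → R)) (m : ℕ) :
    (X × (Y × (Fin m → R))) ≃ₗ[R] (Fin (n + m) → R) :=
  (LinearEquiv.prodAssoc R X Y _).symm ≪≫ₗ φ.prodCongr (.refl R _) ≪≫ₗ
    (LinearEquiv.sumArrowLequivProdArrow _ _ R R).symm ≪≫ₗ
    LinearEquiv.funCongrLeft R R finSumFinEquiv.symm

/-- Mathlib makes this a Boolean algebra, with `e ≤ f ↔ e * f = e` and `eᶜ = 1 - e`. -/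
abbrev Idempotents (R : Type u) [CommRing R] := {e : R // IsIdempotentElem e}

section CornerIdeals

variable {R : Type u} [CommRing R]

theorem Idempotents.coe_inf (a b : Idempotents R) : ((a ⊓ b : Idempotents R) : R) = a * b := rfl

theorem Idempotents.coe_sup (a b : Idempotents R) :
    ((a ⊔ b : Idempotents R) : R) = a + b - a * b := rfl

def spanEquivProdOfMulEqZero {u v w : R} (hu : IsIdempotentElem u) (hv : IsIdempotentElem v)
    (huv : u * v = 0) (hw : u + v = w) :
    Ideal.span {w} ≃ₗ[R] Ideal.span {u} × Ideal.span {v} := by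
  subst hw
  have hw := hu.add hv (by rw [mul_comm v, huv, add_zero])
  exact
  { toFun z := (⟨u * z, Ideal.mul_mem_right _ _ (Ideal.mem_span_singleton_self u)⟩,
      ⟨v * z, Ideal.mul_mem_right _ _ (Ideal.mem_span_singleton_self v)⟩)
    invFun p := ⟨p.1 + p.2, by
      have h1 := hu.mem_span_singleton_iff.1 p.1.2
      have h2 := hv.mem_span_singleton_iff.1 p.2.2
      rw [hw.mem_span_singleton_iff]
      linear_combination (1 - v) * h1 + (1 - u) * h2 + (p.1 + p.2 : R) * huv⟩
    map_add' _ _ := by ext <;> simp [mul_add]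
    map_smul' _ _ := by ext <;> simp [mul_left_comm]
    left_inv z := by ext; simp [← add_mul, hw.mem_span_singleton_iff.1 z.2]
    right_inv p := by
      have h1 := hu.mem_span_singleton_iff.1 p.1.2
      have h2 := hv.mem_span_singleton_iff.1 p.2.2
      ext
      · show u * (p.1 + p.2 : R) = p.1
        linear_combination h1 - u * h2 + (p.2 : R) * huv
      · show v * (p.1 + p.2 : R) = p.2
        linear_combination h2 - v * h1 + (p.1 : R) * huv }

/-- Both sides are `(a ⊓ b)R × (a \ b)R × bR`. -/
def spanProdSpanEquivSupInf (a b : Idempotents R) :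
    (Ideal.span {(a : R)} × Ideal.span {(b : R)}) ≃ₗ[R]
      Ideal.span {((a ⊔ b : Idempotents R) : R)} × Ideal.span {((a ⊓ b : Idempotents R) : R)} :=
  have hab : IsIdempotentElem ((a : R) * (1 - b)) := a.2.mul b.2.one_sub
  have hb : (b : R) * (a * (1 - b)) = 0 := by
    rw [mul_left_comm, b.2.mul_one_sub_self, mul_zero]
  have hb' : (a : R) * b * (a * (1 - b)) = 0 := by
    rw [mul_assoc, hb, mul_zero]
  (spanEquivProdOfMulEqZero (a ⊓ b).2 hab hb' (by rw [Idempotents.coe_inf]; ring)).prodCongr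
      (.refl R _) ≪≫ₗ
    LinearEquiv.prodAssoc R _ _ _ ≪≫ₗ
    (LinearEquiv.refl R _).prodCongr (LinearEquiv.prodComm R _ _ ≪≫ₗ
      (spanEquivProdOfMulEqZero b.2 hab hb (by rw [Idempotents.coe_sup]; ring)).symm) ≪≫ₗ
    LinearEquiv.prodComm R _ _

instance (e : Idempotents R) : Module.Projective R (Ideal.span {(e : R)}) :=
  .of_split (Ideal.span {(e : R)}).subtype
    (LinearMap.codRestrict _ (LinearMap.mulLeft R (e : R))
      fun x => Ideal.mul_mem_right x _ (Ideal.mem_span_singleton_self _))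
    (by ext x; exact e.2.mem_span_singleton_iff.1 x.2)

theorem exists_equiv_span_of_prod_equiv_self {X Y : Type*} [AddCommGroup X] [Module R X]
    [AddCommGroup Y] [Module R Y] (φ : (X × Y) ≃ₗ[R] R) :
    ∃ e : Idempotents R, Nonempty (X ≃ₗ[R] Ideal.span {(e : R)}) := by
  have hcompl : IsCompl (LinearMap.range (φ.toLinearMap ∘ₗ LinearMap.inl R X Y))
      (LinearMap.range (φ.toLinearMap ∘ₗ LinearMap.inr R X Y)) := by
    rw [LinearMap.range_comp, LinearMap.range_comp]
    exact LinearMap.isCompl_range_inl_inr.map (Submodule.orderIsoMapComap φ)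
  obtain ⟨e, he, hI⟩ := Ideal.exists_isIdempotentElem_eq_span_of_isCompl hcompl
  exact ⟨⟨e, he⟩, ⟨(LinearEquiv.ofInjective (φ.toLinearMap ∘ₗ LinearMap.inl R X Y)
    (φ.injective.comp LinearMap.inl_injective)).trans (LinearEquiv.ofEq _ _ hI)⟩⟩

end CornerIdeals

section Rank

variable {R : Type u} [CommRing R]

theorem rankAtStalk_span_eq_zero_of_mem {e : Idempotents R} {p : PrimeSpectrum R}
    (hp : (e : R) ∈ p.asIdeal) : rankAtStalk (Ideal.span {(e : R)}) p = 0 := by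
  rw [rankAtStalk_eq_zero_iff_notMem_support, Module.notMem_support_iff']
  refine fun x => ⟨1 - e, fun h => p.isPrime.ne_top ?_, ?_⟩
  · exact (Ideal.eq_top_iff_one _).2 (by simpa using p.asIdeal.add_mem h hp)
  · ext
    simp [sub_mul, e.2.mem_span_singleton_iff.1 x.2]

open scoped Classical in
theorem rankAtStalk_span (e : Idempotents R) (p : PrimeSpectrum R) :
    rankAtStalk (Ideal.span {(e : R)}) p = if p ∈ basicOpen (e : R) then 1 else 0 := by
  have := p.nontrivial
  have hsum : rankAtStalk (Ideal.span {(e : R)}) p +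
      rankAtStalk (Ideal.span {((eᶜ : Idempotents R) : R)}) p = 1 := by
    have φ : Ideal.span {(1 : R)} ≃ₗ[R]
        Ideal.span {(e : R)} × Ideal.span {((eᶜ : Idempotents R) : R)} :=
      spanEquivProdOfMulEqZero e.2 eᶜ.2 e.2.mul_one_sub_self (add_sub_cancel _ _)
    rw [← Pi.add_apply, ← rankAtStalk_prod, ← rankAtStalk_eq_of_equiv φ,
      rankAtStalk_eq_of_equiv ((LinearEquiv.ofEq _ _ Ideal.span_singleton_one).trans
        Submodule.topEquiv), rankAtStalk_self, Pi.one_apply]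
  split_ifs with hp
  · have hc : ((eᶜ : Idempotents R) : R) ∈ p.asIdeal :=
      (p.isPrime.mem_or_mem (by simp [e.2.mul_one_sub_self])).resolve_left hp
    rwa [rankAtStalk_span_eq_zero_of_mem hc, add_zero] at hsum
  · exact rankAtStalk_span_eq_zero_of_mem (not_not.1 hp)

open Finset

open scoped Classical in
theorem rankAtStalk_pi_span {n : ℕ} (e : Fin n → Idempotents R) (p : PrimeSpectrum R) :
    rankAtStalk (Π i, Ideal.span {(e i : R)}) p = #{i | p ∈ basicOpen (e i : R)} := by
  rw [rankAtStalk_pi, finsum_eq_sum_of_fintype, card_filter]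
  simp only [rankAtStalk_span]

theorem mem_basicOpen_of_le {e f : Idempotents R} (hef : e ≤ f) {p : PrimeSpectrum R}
    (hp : p ∈ basicOpen (e : R)) : p ∈ basicOpen (f : R) :=
  fun hf => hp (hef ▸ p.asIdeal.mul_mem_left _ hf)

open scoped Classical in
theorem Antitone.mem_basicOpen_iff_lt_card {n : ℕ} {e : Fin n → Idempotents R} (he : Antitone e)
    (p : PrimeSpectrum R) (i : Fin n) :
    p ∈ basicOpen (e i : R) ↔ (i : ℕ) < #{j | p ∈ basicOpen (e j : R)} := by
  constructor
  · intro hi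
    calc (i : ℕ) < #(Iic i) := by simp
      _ ≤ _ := card_le_card fun j hj => by
        simpa using mem_basicOpen_of_le (he (mem_Iic.1 hj)) hi
  · intro hlt
    by_contra hi
    have : #{j | p ∈ basicOpen (e j : R)} ≤ #(Iio i) := card_le_card fun j hj => by
      simp only [mem_filter, mem_univ, true_and] at hj
      exact mem_Iio.2 (lt_of_not_ge fun hij => hi (mem_basicOpen_of_le (he hij) hj))
    rw [Fin.card_Iio] at this
    omega

theorem Antitone.eq_of_rankAtStalk_pi_span_eq {n : ℕ} {e f : Fin n → Idempotents R}
    (he : Antitone e) (hf : Antitone f)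
    (h : rankAtStalk (R := R) (Π i, Ideal.span {(e i : R)}) =
      rankAtStalk (Π i, Ideal.span {(f i : R)})) :
    e = f := by
  classical
  funext i
  refine isIdempotentElemEquivClopens.injective (TopologicalSpace.Clopens.ext ?_)
  ext p
  have hp := congrFun h p
  rw [rankAtStalk_pi_span, rankAtStalk_pi_span] at hp
  rw [coe_isIdempotentElemEquivClopens_apply, coe_isIdempotentElemEquivClopens_apply,
    SetLike.mem_coe, SetLike.mem_coe, he.mem_basicOpen_iff_lt_card,
    hf.mem_basicOpen_iff_lt_card, hp]

end Rank

section Sorting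

variable {R : Type u} [CommRing R]

/-- Insertion into a chain, via the exchange `spanProdSpanEquivSupInf`. -/
def insertChain (g : Idempotents R) :
    {n : ℕ} → (Fin n → Idempotents R) → Fin (n + 1) → Idempotents R
  | 0, _ => fun _ => g
  | _ + 1, f => Fin.cons (g ⊔ f 0) (insertChain (g ⊓ f 0) (Fin.tail f))

theorem insertChain_le {n : ℕ} {g c : Idempotents R} {f : Fin n → Idempotents R} (hg : g ≤ c)
    (hf : ∀ i, f i ≤ c) (j : Fin (n + 1)) : insertChain g f j ≤ c := by
  induction n generalizing g with
  | zero => exact hg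
  | succ n ih =>
    refine Fin.cases (sup_le hg (hf 0)) (fun j => ?_) j
    exact ih (inf_le_left.trans hg) (fun i => hf i.succ) j

theorem Antitone.insertChain {n : ℕ} (g : Idempotents R) {f : Fin n → Idempotents R}
    (hf : Antitone f) : Antitone (insertChain g f) := by
  induction n generalizing g with
  | zero => exact antitone_const
  | succ n ih =>
    refine antitone_vecCons.2 ⟨insertChain_le inf_le_sup (fun i => ?_) 0, ih _ fun i j hij => ?_⟩
    · exact (hf (Fin.zero_le _)).trans le_sup_right
    · exact hf (Fin.succ_le_succ_iff.2 hij)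

theorem nonempty_prod_pi_span_equiv_insertChain {n : ℕ} (g : Idempotents R)
    (f : Fin n → Idempotents R) :
    Nonempty ((Ideal.span {(g : R)} × Π i, Ideal.span {(f i : R)}) ≃ₗ[R]
      Π i, Ideal.span {(insertChain g f i : R)}) := by
  induction n generalizing g with
  | zero =>
    exact ⟨((LinearEquiv.refl R _).prodCongr (.ofSubsingleton _ _)).trans
      (Fin.consLinearEquiv R fun i => Ideal.span {(insertChain g f i : R)})⟩
  | succ n ih =>
    obtain ⟨φ⟩ := ih (g ⊓ f 0) (Fin.tail f)
    exact ⟨(LinearEquiv.refl R _).prodCongr (Fin.consLinearEquiv R _).symm ≪≫ₗ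
      (LinearEquiv.prodAssoc R _ _ _).symm ≪≫ₗ
      (spanProdSpanEquivSupInf g (f 0)).prodCongr (.refl R _) ≪≫ₗ
      LinearEquiv.prodAssoc R _ _ _ ≪≫ₗ (LinearEquiv.refl R _).prodCongr φ ≪≫ₗ
      Fin.consLinearEquiv R fun i => Ideal.span {(insertChain g f i : R)}⟩

theorem exists_antitone_pi_span_equiv {n : ℕ} (e : Fin n → Idempotents R) :
    ∃ f : Fin n → Idempotents R, Antitone f ∧
      Nonempty ((Π i, Ideal.span {(e i : R)}) ≃ₗ[R] Π i, Ideal.span {(f i : R)}) := by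
  induction n with
  | zero => exact ⟨e, fun i => i.elim0, ⟨.refl R _⟩⟩
  | succ n ih =>
    obtain ⟨f, hf, ⟨φ⟩⟩ := ih (Fin.tail e)
    obtain ⟨ψ⟩ := nonempty_prod_pi_span_equiv_insertChain (e 0) f
    exact ⟨insertChain (e 0) f, hf.insertChain _,
      ⟨(Fin.consLinearEquiv R _).symm ≪≫ₗ (LinearEquiv.refl R _).prodCongr φ ≪≫ₗ ψ⟩⟩

end Sorting

namespace IsRefinementRing

variable {R : Type u} [CommRing R] (hR : IsRefinementRing R)
include hR

theorem exists_equiv_pi_span_of_prod_equiv {n : ℕ} {X Y : Type u} [AddCommGroup X] [Module R X]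
    [AddCommGroup Y] [Module R Y] (φ : (X × Y) ≃ₗ[R] (Fin n → R)) :
    ∃ e : Fin n → Idempotents R, Nonempty (X ≃ₗ[R] Π i, Ideal.span {(e i : R)}) := by
  induction n generalizing X Y with
  | zero =>
    have : Subsingleton X :=
      (φ.injective.comp (LinearMap.inl_injective (R := R) (M := X) (M₂ := Y))).subsingleton
    exact ⟨Fin.elim0, ⟨.ofSubsingleton _ _⟩⟩
  | succ n ih =>
    obtain ⟨hXf, hXp⟩ := Module.finite_projective_of_prod_equiv φ
    obtain ⟨hYf, hYp⟩ := Module.finite_projective_of_prod_equiv (LinearEquiv.prodComm R Y X ≪≫ₗ φ)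
    obtain ⟨E₁₁, E₁₂, E₂₁, E₂₂, -, -, -, -, ⟨hX⟩, -, ⟨hC⟩, ⟨hD⟩⟩ :=
      hR (.of R X) (.of R Y) (.of R R) (.of R (Fin n → R)) hXf hXp hYf hYp inferInstance
        inferInstance inferInstance inferInstance ⟨φ ≪≫ₗ (Fin.consLinearEquiv R fun _ => R).symm⟩
    obtain ⟨e₀, ⟨ψ₀⟩⟩ := exists_equiv_span_of_prod_equiv_self hC.symm
    obtain ⟨e, ⟨ψ⟩⟩ := ih hD.symm
    let e' : Fin (n + 1) → Idempotents R := Fin.cons e₀ e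
    exact ⟨e', ⟨hX ≪≫ₗ ψ₀.prodCongr ψ ≪≫ₗ
      Fin.consLinearEquiv R fun i => Ideal.span {(e' i : R)}⟩⟩

theorem exists_antitone_equiv_pi_span_of_prod_equiv {n : ℕ} {X Y : Type u} [AddCommGroup X]
    [Module R X] [AddCommGroup Y] [Module R Y] (φ : (X × Y) ≃ₗ[R] (Fin n → R)) :
    ∃ e : Fin n → Idempotents R, Antitone e ∧ Nonempty (X ≃ₗ[R] Π i, Ideal.span {(e i : R)}) := by
  obtain ⟨e, ⟨ψ⟩⟩ := hR.exists_equiv_pi_span_of_prod_equiv φ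
  obtain ⟨f, hf, ⟨χ⟩⟩ := exists_antitone_pi_span_equiv e
  exact ⟨f, hf, ⟨ψ ≪≫ₗ χ⟩⟩

end IsRefinementRing

/-- Two finitely generated projective modules over a commutative refinement ring are
isomorphic iff their localizations at every prime ideal are isomorphic as modules over
the localized ring. -/
theorem fg_proj_iso_iff_localization_prime_iso
    {R : Type u} [CommRing R] (hR : IsRefinementRing R)
    (M N : Type u) [AddCommGroup M] [Module R M] [AddCommGroup N] [Module R N]
    [Module.Finite R M] [Module.Projective R M]
    [Module.Finite R N] [Module.Projective R N] :
    Nonempty (M ≃ₗ[R] N) ↔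
      ∀ (P : Ideal R) [P.IsPrime],
        Nonempty (LocalizedModule P.primeCompl M ≃ₗ[Localization P.primeCompl]
          LocalizedModule P.primeCompl N) := by
  refine ⟨fun ⟨φ⟩ P _ => ⟨IsLocalizedModule.mapEquiv P.primeCompl
    (LocalizedModule.mkLinearMap _ M) (LocalizedModule.mkLinearMap _ N) _ φ⟩, fun h => ?_⟩
  obtain ⟨a, K, ⟨φK⟩⟩ := exists_prod_equiv_fin_of_projective (R := R) M
  obtain ⟨b, L, ⟨φL⟩⟩ := exists_prod_equiv_fin_of_projective (R := R) N
  obtain ⟨e, he, ⟨ψM⟩⟩ := hR.exists_antitone_equiv_pi_span_of_prod_equiv (φK.prodPadFin b)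
  obtain ⟨f, hf, ⟨ψN⟩⟩ := hR.exists_antitone_equiv_pi_span_of_prod_equiv
    (φL.prodPadFin a ≪≫ₗ LinearEquiv.funCongrLeft R R (finCongr (add_comm a b)))
  have hrank : rankAtStalk (R := R) (Π i, Ideal.span {(e i : R)}) =
      rankAtStalk (Π i, Ideal.span {(f i : R)}) := by
    ext p
    rw [← rankAtStalk_eq_of_equiv ψM, ← rankAtStalk_eq_of_equiv ψN]
    exact (h p.asIdeal).some.finrank_eq
  obtain rfl := he.eq_of_rankAtStalk_pi_span_eq hf hrank
  exact ⟨ψM ≪≫ₗ ψN.symm⟩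
end

section
/- The polynomial ring (ℤ/4ℤ)[X] is not a Hermite ring: there exists a 1×2 matrix over (ℤ/4ℤ)[X] (for instance the row (2, X)) that does not admit a diagonal reduction. -/
open Polynomial

/-- An `m × n` matrix `A` over a ring `R` admits a *diagonal reduction* if there are
invertible square matrices `P` and `Q` with `P * A * Q` diagonal (all off-diagonal entries
vanish). -/
def AdmitsDiagonalReduction {R : Type*} [Ring R] {m n : ℕ}
    (A : Matrix (Fin m) (Fin n) R) : Prop :=
  ∃ (P : Matrix (Fin m) (Fin m) R) (Q : Matrix (Fin n) (Fin n) R),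
    IsUnit P ∧ IsUnit Q ∧ ∀ (i : Fin m) (j : Fin n), (i : ℕ) ≠ (j : ℕ) → (P * A * Q) i j = 0

/-- A ring is a (right) *Hermite ring* if every `1 × 2` matrix admits a diagonal
reduction. -/
def IsHermiteRing (R : Type*) [Ring R] : Prop :=
  ∀ A : Matrix (Fin 1) (Fin 2) R, AdmitsDiagonalReduction A

/-- `(ℤ/4ℤ)[X]` is not a Hermite ring: the row `(2, X)` admits no diagonal reduction. -/
theorem zmod4_poly_not_hermite :
    ¬ AdmitsDiagonalReduction (!![2, X] : Matrix (Fin 1) (Fin 2) (Polynomial (ZMod 4))) ∧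
      ¬ IsHermiteRing (Polynomial (ZMod 4)) := by
  have key : ¬ AdmitsDiagonalReduction (!![2, X] : Matrix (Fin 1) (Fin 2) (Polynomial (ZMod 4))) := by
    rintro ⟨P, Q, hP, hQ, h⟩
    have hp : IsUnit (P 0 0) := by
      have := (Matrix.isUnit_iff_isUnit_det P).mp hP
      rwa [Matrix.det_fin_one] at this
    have h01 := h 0 1 (by norm_num)
    have hmul : P 0 0 * (2 * Q 0 1 + X * Q 1 1) = 0 := by
      have e : (P * !![(2 : (ZMod 4)[X]), X] * Q) 0 1
          = P 0 0 * (2 * Q 0 1 + X * Q 1 1) := by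
        simp [Matrix.mul_apply, Fin.sum_univ_succ, mul_add, mul_assoc]
      rw [e] at h01; exact h01
    have heq : 2 * Q 0 1 + X * Q 1 1 = 0 :=
      hp.mul_left_cancel (by rw [hmul, mul_zero])
    have hc0 : (2 : ZMod 4) * (Q 0 1).coeff 0 = 0 := by
      have := congrArg (fun f => f.coeff 0) heq
      simpa using this
    have hc1 : (2 : ZMod 4) * (Q 0 1).coeff 1 + (Q 1 1).coeff 0 = 0 := by
      have := congrArg (fun f => f.coeff 1) heq
      simpa [coeff_X_mul] using this
    -- constant coefficient of det Q mod 2 is 0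
    set φ : (ZMod 4)[X] →+* ZMod 2 :=
      (ZMod.castHom (by norm_num : (2:ℕ) ∣ 4) (ZMod 2)).comp Polynomial.constantCoeff with hφ
    have hdet : IsUnit (Q.det) := (Matrix.isUnit_iff_isUnit_det Q).mp hQ
    have hunit : IsUnit (φ Q.det) := hdet.map φ
    have c01 : (ZMod.cast ((Q 0 1).coeff 0) : ZMod 2) = 0 := by
      have : ∀ x : ZMod 4, (2 : ZMod 4) * x = 0 → ((ZMod.cast x : ZMod 2) = 0) := by decide
      exact this _ hc0
    have c11 : (ZMod.cast ((Q 1 1).coeff 0) : ZMod 2) = 0 := by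
      have h2 : (Q 1 1).coeff 0 = -(2 * (Q 0 1).coeff 1) := by linear_combination hc1
      have : ∀ x : ZMod 4, (ZMod.cast (-(2 * x) : ZMod 4) : ZMod 2) = 0 := by decide
      rw [h2]; exact this _
    have hzero : φ Q.det = 0 := by
      rw [Matrix.det_fin_two]
      simp only [hφ, RingHom.coe_comp, Function.comp_apply, map_sub, map_mul]
      simp [Polynomial.constantCoeff_apply, c01, c11]
    rw [hzero] at hunit
    exact (by decide : ¬ IsUnit (0 : ZMod 2)) hunit
  exact ⟨key, fun hH => key (hH _)⟩
end

section
/- Let R be a Hermite ring such that the formal power series ring R[[X]] is a Bézout ring. Then R[[X]] is a Hermite ring. -/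
/-- A ring is (right) *Bézout* if every finitely generated right ideal is principal.
Right ideals of `R` are the submodules of `R` viewed as a right module over itself,
i.e. as a module over `Rᵐᵒᵖ`. -/
def IsRightBezoutRing (R : Type*) [Ring R] : Prop :=
  ∀ I : Submodule Rᵐᵒᵖ R, I.FG → ∃ a : R, I = Submodule.span Rᵐᵒᵖ {a}

/-!
Write the row as `h • v`, where `h` generates the right ideal spanned by its entries, so that
`h * (v ⬝ᵥ w) = h` for some `w`. A Hermite reduction of the constant terms of `v`, lifted to a
constant invertible matrix, lets us assume that `v 1` has zero constant term, so that `1 + v 1 * s`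
is a unit for every `s`. Then `h * v 0 * w 0 + h * v 1 = h * u` for a unit `u`, so `h * v 0` is a
right multiple of `h * u`, and two elementary column operations clear the second entry.
-/

open Matrix PowerSeries

section Rows

variable {S : Type*} [Ring S]

/-- The left factor of a diagonal reduction of a row is a `1 × 1` unit, which cannot affect whether
the second entry vanishes. -/
theorem admitsDiagonalReduction_iff_exists_isUnit_vecMul_eq_zero
    (A : Matrix (Fin 1) (Fin 2) S) :
    AdmitsDiagonalReduction A ↔ ∃ Q : Matrix (Fin 2) (Fin 2) S, IsUnit Q ∧ (A 0 ᵥ* Q) 1 = 0 := by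
  have entry : ∀ (P : Matrix (Fin 1) (Fin 1) S) (Q : Matrix (Fin 2) (Fin 2) S),
      (P * A * Q) 0 1 = P 0 0 * (A 0 ᵥ* Q) 1 := fun P Q => by
    simp [Matrix.mul_apply, Matrix.vecMul, dotProduct, mul_add, mul_assoc]
  constructor
  · rintro ⟨_, Q, ⟨U, rfl⟩, hQ, hPAQ⟩
    refine ⟨Q, hQ, ?_⟩
    have hinv : U.inv 0 0 * U.val 0 0 = 1 := by
      simpa [Matrix.mul_apply] using congrFun (congrFun U.inv_val 0) 0
    rw [← one_mul ((A 0 ᵥ* Q) 1), ← hinv, mul_assoc, ← entry, hPAQ 0 1 (by simp), mul_zero]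
  · rintro ⟨Q, hQ, hAQ⟩
    refine ⟨1, Q, isUnit_one, hQ, fun i j hij => ?_⟩
    obtain rfl : i = 0 := Subsingleton.elim i 0
    obtain rfl : j = 1 := Fin.ext (by omega)
    rw [entry, hAQ, mul_zero]

theorem exists_dotProduct_vecMul_eq {n : Type*} [Fintype n] [DecidableEq n] {Q : Matrix n n S}
    (hQ : IsUnit Q) (v w : n → S) : ∃ w', (v ᵥ* Q) ⬝ᵥ w' = v ⬝ᵥ w := by
  obtain ⟨⟨Q, Q', hQQ', -⟩, rfl⟩ := hQ
  exact ⟨Q' *ᵥ w, by rw [dotProduct_mulVec, vecMul_vecMul, Units.val_mk, hQQ', vecMul_one]⟩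

/-- The second column of the matrix is `(1 - c * t, -t)`, which sends `r` to
`r 0 - (r 0 * c + r 1) * t = r 0 - d * t = 0`. -/
theorem exists_isUnit_vecMul_eq_zero {r : Fin 2 → S} {c d t : S} (hd : d = r 0 * c + r 1)
    (ht : r 0 = d * t) : ∃ Q : Matrix (Fin 2) (Fin 2) S, IsUnit Q ∧ (r ᵥ* Q) 1 = 0 := by
  have hQQ' : !![c, 1 - c * t; 1, -t] * !![t, 1 - t * c; 1, -c] = 1 := by
    rw [mul_fin_two, one_fin_two]; congr 1; noncomm_ring
  have hQ'Q : !![t, 1 - t * c; 1, -c] * !![c, 1 - c * t; 1, -t] = 1 := by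
    rw [mul_fin_two, one_fin_two]; congr 1; noncomm_ring
  refine ⟨_, ⟨⟨_, _, hQQ', hQ'Q⟩, rfl⟩, ?_⟩
  calc (r ᵥ* !![c, 1 - c * t; 1, -t]) 1 = r 0 - (r 0 * c + r 1) * t := by
        simp only [vecMul, dotProduct, Fin.sum_univ_two, of_apply, cons_val', cons_val_zero,
          cons_val_one, cons_val_fin_one]
        noncomm_ring
    _ = 0 := by rw [← hd, ← ht, sub_self]

theorem IsRightBezoutRing.exists_eq_smul_and_mul_dotProduct_eq (hS : IsRightBezoutRing S)
    {n : Type*} [Fintype n] (r : n → S) : ∃ (h : S) (v w : n → S), r = h • v ∧ h * (v ⬝ᵥ w) = h := by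
  obtain ⟨h, hI⟩ :=
    hS (Submodule.span Sᵐᵒᵖ (Set.range r)) (Submodule.fg_span (Set.finite_range r))
  have hdvd : ∀ i, ∃ c, r i = h * c := fun i => by
    have hri : r i ∈ Submodule.span Sᵐᵒᵖ {h} := hI ▸ Submodule.subset_span ⟨i, rfl⟩
    obtain ⟨c, hc⟩ := Submodule.mem_span_singleton.1 hri
    exact ⟨c.unop, by rw [← hc, MulOpposite.smul_eq_mul_unop]⟩
  choose v hv using hdvd
  obtain ⟨c, hc⟩ := (Submodule.mem_span_range_iff_exists_fun Sᵐᵒᵖ).1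
    (hI ▸ Submodule.mem_span_singleton_self h)
  refine ⟨h, v, fun i => (c i).unop, funext hv, ?_⟩
  calc h * (v ⬝ᵥ fun i => (c i).unop) = ∑ i, c i • r i := by
        simp only [dotProduct, Finset.mul_sum, hv, MulOpposite.smul_eq_mul_unop, mul_assoc]
    _ = h := hc

/-- Here `u = 1 + v 1 * (1 - w 1)` is a unit with `h * u = h * v 0 * w 0 + h * v 1`. -/
theorem exists_isUnit_smul_vecMul_eq_zero {h : S} {v w : Fin 2 → S} (hvw : h * (v ⬝ᵥ w) = h)
    (hv : ∀ s, IsUnit (1 + v 1 * s)) :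
    ∃ Q : Matrix (Fin 2) (Fin 2) S, IsUnit Q ∧ ((h • v) ᵥ* Q) 1 = 0 := by
  obtain ⟨u, hu⟩ := hv (1 - w 1)
  refine exists_isUnit_vecMul_eq_zero (c := w 0) (d := h * u) (t := ↑u⁻¹ * v 0) ?_ ?_
  · calc h * u = h * (v ⬝ᵥ w) + h * v 1 - h * v 1 * w 1 := by rw [hvw, hu]; noncomm_ring
      _ = _ := by simp only [dotProduct, Fin.sum_univ_two, Pi.smul_apply, smul_eq_mul]; noncomm_ring
  · simp [mul_assoc]

end Rows

theorem PowerSeries.isUnit_one_add_mul_of_constantCoeff_eq_zero {R : Type*} [Ring R]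
    {g : R⟦X⟧} (hg : constantCoeff g = 0) (s : R⟦X⟧) : IsUnit (1 + g * s) := by
  simp [isUnit_iff_constantCoeff, hg]

theorem IsHermiteRing.exists_isUnit_constantCoeff_vecMul_eq_zero {R : Type*} [Ring R]
    (hR : IsHermiteRing R) (v : Fin 2 → R⟦X⟧) :
    ∃ Q : Matrix (Fin 2) (Fin 2) R⟦X⟧, IsUnit Q ∧ constantCoeff ((v ᵥ* Q) 1) = 0 := by
  obtain ⟨Q, hQ, hQ1⟩ := (admitsDiagonalReduction_iff_exists_isUnit_vecMul_eq_zero _).1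
    (hR (replicateRow (Fin 1) (constantCoeff ∘ v)))
  refine ⟨Q.map C, hQ.map C.mapMatrix, ?_⟩
  have hCC : (constantCoeff ∘ C : R → R) = id := funext constantCoeff_C
  rwa [RingHom.map_vecMul, Matrix.map_map, hCC, Matrix.map_id]

/-- If `R` is a Hermite ring such that the formal power series ring `R[[X]]` is a Bézout
ring, then `R[[X]]` is a Hermite ring. -/
theorem powerSeries_hermite_of_bezout {R : Type*} [Ring R]
    (hR : IsHermiteRing R) (hB : IsRightBezoutRing (PowerSeries R)) :
    IsHermiteRing (PowerSeries R) := by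
  intro A
  obtain ⟨h, v, w, hA, hvw⟩ := hB.exists_eq_smul_and_mul_dotProduct_eq (A 0)
  obtain ⟨Q, hQ, hQ1⟩ := hR.exists_isUnit_constantCoeff_vecMul_eq_zero v
  obtain ⟨w', hw'⟩ := exists_dotProduct_vecMul_eq hQ v w
  obtain ⟨Q', hQ', hQ'1⟩ := exists_isUnit_smul_vecMul_eq_zero (h := h) (w := w')
    (by rw [hw', hvw]) (isUnit_one_add_mul_of_constantCoeff_eq_zero hQ1)
  refine (admitsDiagonalReduction_iff_exists_isUnit_vecMul_eq_zero A).2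
    ⟨Q * Q', hQ.mul hQ', ?_⟩
  rwa [hA, ← vecMul_vecMul, smul_vecMul]
end
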